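/- Equivalence of continuous and discrete homogeneous Sobolev norms: for u ∈ ℓ²(ℤ) with Shannon interpolation U, and any integer n ≥ 1, one has ‖u‖²_{Ḣⁿ(ℤ)} = (1/2π) ∫ 2^{2n} sin^{2n}(ω/2) |Û(ω)|² dω, and consequently (2/π)ⁿ ‖∂ₓⁿ U‖_{L²(ℝ)} ≤ ‖u‖_{Ḣⁿ(ℤ)} ≤ ‖∂ₓⁿ U‖_{L²(ℝ)}. -/

import Mathlib

noncomputable section
open MeasureTheory
open scoped ComplexConjugate

/-- The negative discrete Laplacian `(-Δ u)_g = 2 u_g - u_{g+1} - u_{g-1}`. -/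
def negLap (u : ℤ → ℂ) : ℤ → ℂ := fun g => 2 * u g - u (g + 1) - u (g - 1)

/-- The squared discrete homogeneous Sobolev norm `‖u‖_{Ḣⁿ}² = ⟨(-Δ)ⁿ u, u⟩`. -/
def sobNormSq (n : ℕ) (u : ℤ → ℂ) : ℝ :=
  (∑' g : ℤ, (negLap^[n] u) g * conj (u g)).re

/-! The samples `u g` are the Fourier coefficients of `Û` on `[-π, π]`, and the shifts
`g ↦ g ± 1` act on them as multiplication by `e^{∓iω}`; hence `(-Δ)ⁿ u` has spectrum
`(4 sin²(ω/2))ⁿ Û`. Parseval's identity on the circle `ℝ ⧸ 2πℤ` turns `⟨(-Δ)ⁿ u, u⟩` into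
`(1/2π) ∫ (4 sin²(ω/2))ⁿ |Û|²`, and integrating `(2/π)² ω² ≤ 4 sin²(ω/2) ≤ ω²`, valid for
`|ω| ≤ π`, against `|Û|²` gives the norm equivalence. -/

open Real Set Complex AddCircle

theorem hasSum_prod_fourierCoeff {T : ℝ} [Fact (0 < T)] (f g : Lp ℂ 2 (@haarAddCircle T _)) :
    HasSum (fun i ↦ conj (fourierCoeff f i) * fourierCoeff g i)
      (∫ t, conj (f t) * g t ∂haarAddCircle) := by
  simp_rw [mul_comm (conj _)]
  refine HasSum.congr_fun (fourierBasis.hasSum_inner_mul_inner f g) (fun n ↦ ?_)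
  simp only [← fourierBasis_repr, HilbertBasis.repr_apply_apply, inner_conj_symm,
    mul_comm (inner ℂ f _)]

theorem hasSum_prod_fourierCoeffOn {a b : ℝ} (hab : a < b) {f g : ℝ → ℂ}
    (hf : MemLp f 2 (volume.restrict (Ioc a b))) (hg : MemLp g 2 (volume.restrict (Ioc a b))) :
    HasSum (fun i ↦ conj (fourierCoeffOn hab f i) * fourierCoeffOn hab g i)
      ((b - a)⁻¹ • ∫ x in a..b, conj (f x) * g x) := by
  have := Fact.mk (by linarith : 0 < b - a)
  rw [← add_sub_cancel a b] at hf hg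
  have hF := hf.memLp_liftIoc.haarAddCircle
  have hG := hg.memLp_liftIoc.haarAddCircle
  convert hasSum_prod_fourierCoeff hF.toLp hG.toLp using 1
  · simp [fourierCoeff_congr_ae hF.coeFn_toLp, fourierCoeff_congr_ae hG.coeFn_toLp,
      fourierCoeff_liftIoc_eq]
  · have hprod : (fun t ↦ conj (hF.toLp _ t) * hG.toLp _ t)
        =ᵐ[haarAddCircle] liftIoc (b - a) a (fun x ↦ conj (f x) * g x) := by
      filter_upwards [hF.coeFn_toLp, hG.coeFn_toLp] with x hFx hGx
      rw [hFx, hGx]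
      rfl
    rw [integral_congr_ae hprod, integral_haarAddCircle, integral_liftIoc_eq_intervalIntegral,
      add_sub_cancel]

lemma intervalIntegral.integral_eq_integral_of_support_subset_Icc {E : Type*}
    [NormedAddCommGroup E] [NormedSpace ℝ E] {f : ℝ → E} {a b : ℝ} (hab : a ≤ b)
    (hf : Function.support f ⊆ Icc a b) :
    ∫ x in a..b, f x = ∫ x, f x := by
  rw [intervalIntegral.integral_of_le hab, ← integral_Icc_eq_integral_Ioc,
    setIntegral_eq_integral_of_forall_compl_eq_zero]
  exact fun x hx ↦ Function.notMem_support.mp fun h ↦ hx (hf h)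

lemma MeasureTheory.Integrable.continuous_mul_of_support_subset {φ P : ℝ → ℝ} {K : Set ℝ}
    (hφ : Continuous φ) (hP : Integrable P) (hK : IsCompact K) (hsupp : Function.support P ⊆ K) :
    Integrable (fun x ↦ φ x * P x) := by
  rw [← integrableOn_iff_integrable_of_support_subset
    ((Function.support_mul_subset_right _ _).trans hsupp)]
  exact hP.integrableOn.continuousOn_mul hφ.continuousOn hK

lemma integral_mul_le_integral_mul_of_le_on {φ ψ P : ℝ → ℝ} {K : Set ℝ}
    (hφ : Continuous φ) (hψ : Continuous ψ) (hP : Integrable P) (hP0 : 0 ≤ P) (hK : IsCompact K)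
    (hsupp : Function.support P ⊆ K) (hle : ∀ x ∈ K, φ x ≤ ψ x) :
    ∫ x, φ x * P x ≤ ∫ x, ψ x * P x := by
  refine integral_mono (hP.continuous_mul_of_support_subset hφ hK hsupp)
    (hP.continuous_mul_of_support_subset hψ hK hsupp) fun x ↦ ?_
  by_cases hx : x ∈ K
  · exact mul_le_mul_of_nonneg_right (hle x hx) (hP0 x)
  · simp [Function.notMem_support.mp fun h ↦ hx (hsupp h)]

def negLapSymbol (ω : ℝ) : ℝ := 4 * Real.sin (ω / 2) ^ 2

@[fun_prop]
lemma continuous_negLapSymbol : Continuous negLapSymbol := by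
  unfold negLapSymbol; fun_prop

lemma negLapSymbol_nonneg (ω : ℝ) : 0 ≤ negLapSymbol ω := by
  unfold negLapSymbol; positivity

lemma negLapSymbol_le_four (ω : ℝ) : negLapSymbol ω ≤ 4 := by
  unfold negLapSymbol; nlinarith [Real.sin_sq_le_one (ω / 2)]

lemma negLapSymbol_le_sq (ω : ℝ) : negLapSymbol ω ≤ ω ^ 2 := by
  unfold negLapSymbol; nlinarith [Real.sin_sq_le_sq (x := ω / 2)]

lemma two_div_pi_sq_mul_sq_le_negLapSymbol {ω : ℝ} (hω : |ω| ≤ π) :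
    (2 / π) ^ 2 * ω ^ 2 ≤ negLapSymbol ω := by
  have h : 2 / π * |ω / 2| ≤ |Real.sin (ω / 2)| :=
    Real.mul_abs_le_abs_sin (by rw [abs_div, abs_two]; linarith)
  have h2 := pow_le_pow_left₀ (by positivity) h 2
  rw [mul_pow, sq_abs, sq_abs] at h2
  unfold negLapSymbol
  linarith

lemma two_sub_exp_neg_sub_exp (ω : ℝ) :
    2 - exp (-I * ω) - exp (I * ω) = negLapSymbol ω := by
  rw [negLapSymbol]
  push_cast
  rw [Complex.sin_sq, Complex.cos_sq, show 2 * (ω / 2 : ℂ) = ω by ring, Complex.cos]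
  ring_nf

def shannonSample (W : ℝ → ℂ) (g : ℤ) : ℂ :=
  ((1 / (2 * π) : ℝ) : ℂ) * ∫ ω : ℝ, W ω * exp (-I * g * ω)

lemma MeasureTheory.Integrable.mul_exp_neg_I_mul {W : ℝ → ℂ} (hW : Integrable W) (g : ℤ) :
    Integrable (fun ω : ℝ ↦ W ω * exp (-I * g * ω)) := by
  refine hW.mul_bdd (c := 1) (by fun_prop) (.of_forall fun ω ↦ ?_)
  rw [show -I * g * ω = ((-(g * ω) : ℝ) : ℂ) * I by push_cast; ring, norm_exp_ofReal_mul_I]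

lemma MeasureTheory.Integrable.negLapSymbol_mul {W : ℝ → ℂ} (hW : Integrable W) :
    Integrable (fun ω ↦ (negLapSymbol ω : ℂ) * W ω) :=
  hW.bdd_mul (c := 4) (continuous_ofReal.comp continuous_negLapSymbol).aestronglyMeasurable
    (.of_forall fun ω ↦ by
      rw [norm_real, Real.norm_of_nonneg (negLapSymbol_nonneg ω)]
      exact negLapSymbol_le_four ω)

lemma negLap_shannonSample {W : ℝ → ℂ} (hW : Integrable W) :
    negLap (shannonSample W) = shannonSample (fun ω ↦ negLapSymbol ω * W ω) := by
  funext g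
  set A : ℝ → ℂ := fun ω ↦ W ω * exp (-I * g * ω)
  have hshift (k : ℤ) (ω : ℝ) : W ω * exp (-I * ↑(g + k) * ω) = A ω * exp (-I * k * ω) := by
    rw [show -I * ↑(g + k) * ω = -I * g * ω + -I * k * ω by push_cast; ring, Complex.exp_add]
    ring
  have hint (k : ℤ) : Integrable (fun ω ↦ A ω * exp (-I * k * ω)) := by
    simpa only [← hshift] using hW.mul_exp_neg_I_mul (g + k)
  have hA : Integrable A := hW.mul_exp_neg_I_mul g
  have hsymbol : ∫ ω, negLapSymbol ω * W ω * exp (-I * g * ω)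
      = 2 * (∫ ω, A ω) - (∫ ω, A ω * exp (-I * (1 : ℤ) * ω))
        - ∫ ω, A ω * exp (-I * (-1 : ℤ) * ω) := by
    calc ∫ ω, negLapSymbol ω * W ω * exp (-I * g * ω)
        = ∫ ω, 2 * A ω - A ω * exp (-I * (1 : ℤ) * ω) - A ω * exp (-I * (-1 : ℤ) * ω) := by
          refine integral_congr_ae (.of_forall fun ω ↦ ?_)
          simp only [A, ← two_sub_exp_neg_sub_exp]
          push_cast
          ring_nf
      _ = _ := by
          rw [integral_sub, integral_sub, integral_const_mul]
          exacts [hA.const_mul 2, hint 1, (hA.const_mul 2).sub (hint 1), hint (-1)]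
  simp only [negLap, shannonSample, sub_eq_add_neg g 1, hshift, hsymbol]
  ring

lemma iterate_negLap_shannonSample {W : ℝ → ℂ} (hW : Integrable W) (k : ℕ) :
    negLap^[k] (shannonSample W) = shannonSample (fun ω ↦ (negLapSymbol ω : ℂ) ^ k * W ω) := by
  induction k generalizing W with
  | zero => simp
  | succ k ih =>
    rw [Function.iterate_succ_apply, negLap_shannonSample hW, ih hW.negLapSymbol_mul]
    simp only [pow_succ, mul_assoc]

lemma shannonSample_eq_fourierCoeffOn {W : ℝ → ℂ} (hW : Function.support W ⊆ Icc (-π) π) :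
    shannonSample W = fourierCoeffOn (neg_lt_self pi_pos) W := by
  funext g
  have hsupp : Function.support (fun ω : ℝ ↦ fourier (-g) (ω : AddCircle (π - -π)) • W ω)
      ⊆ Icc (-π) π :=
    fun ω hω ↦ hW fun h ↦ hω (by simp [h])
  rw [shannonSample, fourierCoeffOn_eq_integral,
    intervalIntegral.integral_eq_integral_of_support_subset_Icc (neg_le_self pi_pos.le) hsupp]
  simp only [fourier_coe_apply, smul_eq_mul, Complex.real_smul]
  congr 1
  · push_cast; ring
  · refine integral_congr_ae (.of_forall fun ω ↦ ?_)
    have hπ : (π : ℂ) ≠ 0 := ofReal_ne_zero.mpr pi_ne_zero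
    rw [mul_comm]
    push_cast
    field_simp
    norm_num

lemma conj_mul_ofReal_mul_self (W : ℂ) (s : ℝ) : conj W * (s * W) = ((s * ‖W‖ ^ 2 : ℝ) : ℂ) := by
  rw [mul_left_comm, mul_comm (conj W), mul_conj, normSq_eq_norm_sq]
  push_cast; ring

lemma sobNormSq_shannonSample {W : ℝ → ℂ} (hint : Integrable W) (hL2 : MemLp W 2)
    (hsupp : Function.support W ⊆ Icc (-π) π) (n : ℕ) :
    sobNormSq n (shannonSample W) = 1 / (2 * π) * ∫ ω, negLapSymbol ω ^ n * ‖W ω‖ ^ 2 := by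
  set V : ℝ → ℂ := fun ω ↦ (negLapSymbol ω : ℂ) ^ n * W ω
  have hVsupp : Function.support V ⊆ Icc (-π) π :=
    (Function.support_mul_subset_right _ _).trans hsupp
  have hV2 : MemLp V 2 (volume.restrict (Ioc (-π) π)) := by
    refine (hL2.restrict _).of_le_mul (c := 4 ^ n)
      ((by fun_prop : Continuous fun ω ↦ (negLapSymbol ω : ℂ) ^ n).aestronglyMeasurable.mul
        (hL2.restrict _).aestronglyMeasurable) (.of_forall fun ω ↦ ?_)
    rw [norm_mul, norm_pow, norm_real, Real.norm_of_nonneg (negLapSymbol_nonneg ω)]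
    gcongr
    exacts [negLapSymbol_nonneg ω, negLapSymbol_le_four ω]
  have hparseval :=
    (hasSum_prod_fourierCoeffOn (neg_lt_self pi_pos) (hL2.restrict _) hV2).tsum_eq
  rw [sobNormSq, iterate_negLap_shannonSample hint, shannonSample_eq_fourierCoeffOn hsupp,
    shannonSample_eq_fourierCoeffOn hVsupp]
  simp_rw [mul_comm _ (conj _)]
  rw [hparseval, intervalIntegral.integral_eq_integral_of_support_subset_Icc
    (neg_le_self pi_pos.le) ((Function.support_mul_subset_right _ _).trans hVsupp)]
  simp only [V, ← ofReal_pow, conj_mul_ofReal_mul_self, integral_complex_ofReal]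
  rw [real_smul, ← ofReal_mul, ofReal_re]
  ring

theorem discrete_continuous_sobolev_equiv_general (u : ℤ → ℂ)
    (Uhat : ℝ → ℂ) (hint : Integrable Uhat) (hL2 : MemLp Uhat 2 volume)
    (hsupp : Function.support Uhat ⊆ Set.Icc (-Real.pi) Real.pi)
    (hinterp : ∀ g : ℤ,
      u g = ((1 / (2 * Real.pi) : ℝ) : ℂ) *
        ∫ ω : ℝ, Uhat ω * Complex.exp (-Complex.I * g * ω))
    (n : ℕ) :
    sobNormSq n u =
        (1 / (2 * Real.pi)) * ∫ ω : ℝ, 2 ^ (2 * n) * Real.sin (ω / 2) ^ (2 * n) * ‖Uhat ω‖ ^ 2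
      ∧ (2 / Real.pi) ^ n * Real.sqrt ((1 / (2 * Real.pi)) * ∫ ω : ℝ, ω ^ (2 * n) * ‖Uhat ω‖ ^ 2)
          ≤ Real.sqrt (sobNormSq n u)
      ∧ Real.sqrt (sobNormSq n u)
          ≤ Real.sqrt ((1 / (2 * Real.pi)) * ∫ ω : ℝ, ω ^ (2 * n) * ‖Uhat ω‖ ^ 2) := by
  have hsymbol (ω : ℝ) : negLapSymbol ω ^ n = 2 ^ (2 * n) * Real.sin (ω / 2) ^ (2 * n) := by
    rw [negLapSymbol, pow_mul, pow_mul, ← mul_pow]; norm_num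
  have hnorm : sobNormSq n u = 1 / (2 * π) * ∫ ω, negLapSymbol ω ^ n * ‖Uhat ω‖ ^ 2 := by
    rw [funext hinterp, ← sobNormSq_shannonSample hint hL2 hsupp n]; rfl
  have hP : Integrable fun ω ↦ ‖Uhat ω‖ ^ 2 := hL2.norm.integrable_sq
  have hupper : ∫ ω, negLapSymbol ω ^ n * ‖Uhat ω‖ ^ 2 ≤ ∫ ω, ω ^ (2 * n) * ‖Uhat ω‖ ^ 2 :=
    integral_mul_le_integral_mul_of_le_on (by fun_prop) (by fun_prop) hP (fun _ ↦ by positivity)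
      isCompact_Icc (by simpa using hsupp) fun ω _ ↦ by
        rw [pow_mul]; exact pow_le_pow_left₀ (negLapSymbol_nonneg ω) (negLapSymbol_le_sq ω) n
  have hlower : (2 / π) ^ (2 * n) * ∫ ω, ω ^ (2 * n) * ‖Uhat ω‖ ^ 2
      ≤ ∫ ω, negLapSymbol ω ^ n * ‖Uhat ω‖ ^ 2 := by
    rw [← integral_const_mul]
    simp_rw [← mul_assoc]
    refine integral_mul_le_integral_mul_of_le_on (by fun_prop) (by fun_prop) hP
      (fun _ ↦ by positivity) isCompact_Icc (by simpa using hsupp) fun ω hω ↦ ?_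
    rw [pow_mul, pow_mul, ← mul_pow]
    exact pow_le_pow_left₀ (by positivity) (two_div_pi_sq_mul_sq_le_negLapSymbol (abs_le.mpr hω)) n
  refine ⟨by simpa only [hsymbol] using hnorm, ?_, ?_⟩
  · rw [hnorm, ← Real.sqrt_sq (by positivity : 0 ≤ (2 / π) ^ n), ← Real.sqrt_mul (sq_nonneg _),
      ← pow_mul, mul_comm n 2, mul_left_comm]
    gcongr
  · rw [hnorm]
    gcongr

/-- Equivalence of continuous and discrete homogeneous Sobolev norms: if `Û` is the
Fourier transform (supported in `[-π,π]`) of the Shannon interpolation `U` of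
`u ∈ ℓ²(ℤ)`, then `‖u‖²_{Ḣⁿ(ℤ)} = (1/2π) ∫ 2^{2n} sin^{2n}(ω/2) |Û(ω)|² dω` and
`(2/π)ⁿ ‖∂ₓⁿU‖_{L²} ≤ ‖u‖_{Ḣⁿ(ℤ)} ≤ ‖∂ₓⁿU‖_{L²}`, where
`‖∂ₓⁿU‖²_{L²} = (1/2π) ∫ ω^{2n} |Û(ω)|² dω`. -/
theorem discrete_continuous_sobolev_equiv (u : ℤ → ℂ) (hu : Memℓp u 2)
    (Uhat : ℝ → ℂ) (hint : Integrable Uhat) (hL2 : MemLp Uhat 2 volume)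
    (hsupp : Function.support Uhat ⊆ Set.Icc (-Real.pi) Real.pi)
    (hinterp : ∀ g : ℤ,
      u g = ((1 / (2 * Real.pi) : ℝ) : ℂ) *
        ∫ ω : ℝ, Uhat ω * Complex.exp (-Complex.I * g * ω))
    (n : ℕ) (hn : 1 ≤ n) :
    sobNormSq n u =
        (1 / (2 * Real.pi)) * ∫ ω : ℝ, 2 ^ (2 * n) * Real.sin (ω / 2) ^ (2 * n) * ‖Uhat ω‖ ^ 2
      ∧ (2 / Real.pi) ^ n * Real.sqrt ((1 / (2 * Real.pi)) * ∫ ω : ℝ, ω ^ (2 * n) * ‖Uhat ω‖ ^ 2)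
          ≤ Real.sqrt (sobNormSq n u)
      ∧ Real.sqrt (sobNormSq n u)
          ≤ Real.sqrt ((1 / (2 * Real.pi)) * ∫ ω : ℝ, ω ^ (2 * n) * ‖Uhat ω‖ ^ 2) :=
  discrete_continuous_sobolev_equiv_general u Uhat hint hL2 hsupp hinterp n
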